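/- arXiv:2508.15686 — 5 statements merged into one kernel-verified Lean document; each statement's English description precedes it below -/
import Mathlib

section
/- Let E be a vector space with two norms ‖·‖₁ and ‖·‖₂. If every sequence in E that is Cauchy with respect to ‖·‖₁ is Cauchy with respect to ‖·‖₂ and conversely, then the two norms are equivalent. -/
/-- `n` satisfies the axioms of a norm on the `𝕜`-vector space `E`. -/
def IsNormOn (𝕜 : Type*) {E : Type*} [RCLike 𝕜] [AddCommGroup E] [Module 𝕜 E]
    (n : E → ℝ) : Prop :=
  (∀ u : E, n u = 0 ↔ u = 0) ∧
  (∀ (a : 𝕜) (u : E), n (a • u) = ‖a‖ * n u) ∧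
  (∀ u v : E, n (u + v) ≤ n u + n v)

/-- `u` is a Cauchy sequence with respect to the norm function `n`. -/
def IsCauchyWith {E : Type*} [AddCommGroup E] (n : E → ℝ) (u : ℕ → E) : Prop :=
  ∀ ε > (0 : ℝ), ∃ N : ℕ, ∀ m ≥ N, ∀ k ≥ N, n (u m - u k) < ε

lemma isNormOn_neg {𝕜 E : Type*} [RCLike 𝕜] [AddCommGroup E] [Module 𝕜 E]
    {n : E → ℝ} (hn : IsNormOn 𝕜 n) (u : E) : n (-u) = n u := by
  have := hn.2.1 (-1 : 𝕜) u
  simpa [neg_one_smul] using this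

lemma isNormOn_nonneg {𝕜 E : Type*} [RCLike 𝕜] [AddCommGroup E] [Module 𝕜 E]
    {n : E → ℝ} (hn : IsNormOn 𝕜 n) (u : E) : 0 ≤ n u := by
  have h0 : n 0 = 0 := (hn.1 0).mpr rfl
  have := hn.2.2 u (-u)
  rw [add_neg_cancel, h0, isNormOn_neg hn] at this
  linarith

lemma isNormOn_sub {𝕜 E : Type*} [RCLike 𝕜] [AddCommGroup E] [Module 𝕜 E]
    {n : E → ℝ} (hn : IsNormOn 𝕜 n) (u v : E) : n (u - v) ≤ n u + n v := by
  have := hn.2.2 u (-v)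
  rw [isNormOn_neg hn] at this
  simpa [sub_eq_add_neg] using this

lemma aux_bound {𝕜 E : Type*} [RCLike 𝕜] [AddCommGroup E] [Module 𝕜 E]
    (n₁ n₂ : E → ℝ) (h₁ : IsNormOn 𝕜 n₁) (h₂ : IsNormOn 𝕜 n₂)
    (h : ∀ u : ℕ → E, IsCauchyWith n₁ u → IsCauchyWith n₂ u) :
    ∃ c > (0 : ℝ), ∀ u : E, n₂ u ≤ c * n₁ u := by
  by_contra hcon
  push_neg at hcon
  have H : ∀ k : ℕ, ∃ u : E, ((k : ℝ) + 1) * n₁ u < n₂ u := by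
    intro k
    obtain ⟨u, hu⟩ := hcon ((k : ℝ) + 1) (by positivity)
    exact ⟨u, hu⟩
  choose u hu using H
  have hpos : ∀ k, 0 < n₂ (u k) := by
    intro k
    have := hu k
    have h1 := isNormOn_nonneg h₁ (u k)
    nlinarith
  set w : ℕ → E := fun k => (((n₂ (u k))⁻¹ : ℝ) : 𝕜) • u k with hw
  have hw2 : ∀ k, n₂ (w k) = 1 := by
    intro k
    rw [hw]
    simp only
    rw [h₂.2.1]
    rw [RCLike.norm_ofReal, abs_of_pos (inv_pos.mpr (hpos k))]
    rw [inv_mul_cancel₀ (hpos k).ne']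
  have hw1 : ∀ k, n₁ (w k) < ((k : ℝ) + 1)⁻¹ := by
    intro k
    rw [hw]
    simp only
    rw [h₁.2.1, RCLike.norm_ofReal, abs_of_pos (inv_pos.mpr (hpos k))]
    rw [inv_mul_lt_iff₀ (hpos k), ← div_eq_mul_inv,
      lt_div_iff₀ (by positivity : (0:ℝ) < (k:ℝ)+1)]
    nlinarith [hu k]
  set v : ℕ → E := fun k => if Even k then w k else 0 with hv
  have hvb : ∀ k, n₁ (v k) ≤ ((k : ℝ) + 1)⁻¹ := by
    intro k
    rw [hv]
    by_cases hk : Even k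
    · simp only [hk, if_pos]
      exact (hw1 k).le
    · simp only [hk, if_neg, if_false]
      rw [(h₁.1 0).mpr rfl]
      positivity
  have hc1 : IsCauchyWith n₁ v := by
    intro ε hε
    obtain ⟨N, hN⟩ := exists_nat_gt (2 / ε)
    have hNpos : (0 : ℝ) < N := lt_of_le_of_lt (by positivity) hN
    refine ⟨N, fun m hm k hk => ?_⟩
    have hb : n₁ (v m - v k) ≤ n₁ (v m) + n₁ (v k) := isNormOn_sub h₁ _ _
    have h1 : ((m : ℝ) + 1)⁻¹ ≤ (N : ℝ)⁻¹ := by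
      apply inv_anti₀ hNpos
      push_cast
      have : (N : ℝ) ≤ m := by exact_mod_cast hm
      linarith
    have h2 : ((k : ℝ) + 1)⁻¹ ≤ (N : ℝ)⁻¹ := by
      apply inv_anti₀ hNpos
      push_cast
      have : (N : ℝ) ≤ k := by exact_mod_cast hk
      linarith
    have h3 : (N : ℝ)⁻¹ < ε / 2 := by
      rw [inv_lt_iff_one_lt_mul₀ hNpos]
      rw [div_lt_iff₀ hε] at hN
      nlinarith
    have := hvb m
    have := hvb k
    linarith
  have hc2 := h v hc1
  obtain ⟨N, hN⟩ := hc2 1 one_pos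
  have := hN (2 * N) (by omega) (2 * N + 1) (by omega)
  have he : Even (2 * N) := even_two_mul N
  have ho : ¬ Even (2 * N + 1) := by simp [Nat.even_add_one, he]
  rw [hv] at this
  simp only [he, if_pos, ho, if_neg, if_false, sub_zero] at this
  rw [hw2] at this
  exact lt_irrefl 1 this

/-- if two norms on `E` have the same Cauchy sequences,
then they are equivalent. -/
theorem stmt4 {𝕜 E : Type*} [RCLike 𝕜] [AddCommGroup E] [Module 𝕜 E]
    (n₁ n₂ : E → ℝ) (h₁ : IsNormOn 𝕜 n₁) (h₂ : IsNormOn 𝕜 n₂)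
    (h : ∀ u : ℕ → E, IsCauchyWith n₁ u ↔ IsCauchyWith n₂ u) :
    ∃ c₁ > (0 : ℝ), ∃ c₂ > (0 : ℝ), ∀ u : E, c₁ * n₁ u ≤ n₂ u ∧ n₂ u ≤ c₂ * n₁ u := by
  obtain ⟨c, hc, hle⟩ := aux_bound n₁ n₂ h₁ h₂ (fun u => (h u).mp)
  obtain ⟨d, hd, hle'⟩ := aux_bound n₂ n₁ h₂ h₁ (fun u => (h u).mpr)
  refine ⟨d⁻¹, by positivity, c, hc, fun u => ⟨?_, hle u⟩⟩
  rw [inv_mul_le_iff₀ hd]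
  exact hle' u
end

section
/- For every infinite-dimensional Banach space (E, ‖·‖₁) there exists another norm ‖·‖₂ on E such that (E, ‖·‖₂) is also a Banach space but ‖·‖₁ and ‖·‖₂ are not equivalent. -/
/-- `E` is complete with respect to the norm function `n`. -/
def CompleteWith {E : Type*} [AddCommGroup E] (n : E → ℝ) : Prop :=
  ∀ u : ℕ → E, IsCauchyWith n u →
    ∃ l : E, ∀ ε > (0 : ℝ), ∃ N : ℕ, ∀ m ≥ N, n (u m - l) < ε

open Module

theorem isNormOn_norm_comp {𝕜 E F 𝓕 : Type*} [RCLike 𝕜] [AddCommGroup E] [Module 𝕜 E]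
    [NormedAddCommGroup F] [NormedSpace 𝕜 F] [FunLike 𝓕 E F] [LinearMapClass 𝓕 𝕜 E F]
    {T : 𝓕} (hT : Function.Injective T) :
    IsNormOn 𝕜 (fun x => ‖T x‖) := by
  refine ⟨fun u => ?_, fun a u => ?_, fun u v => ?_⟩
  · rw [norm_eq_zero, map_eq_zero_iff T hT]
  · simp only [map_smul, norm_smul]
  · simp only [map_add, norm_add_le]

theorem completeWith_norm_comp {E F 𝓕 : Type*} [AddCommGroup E] [NormedAddCommGroup F]
    [CompleteSpace F] [FunLike 𝓕 E F] [AddMonoidHomClass 𝓕 E F]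
    {T : 𝓕} (hT : Function.Surjective T) :
    CompleteWith (fun x => ‖T x‖) := by
  intro u hu
  have hcauchy : CauchySeq (fun n => T (u n)) := by
    refine Metric.cauchySeq_iff.2 fun ε hε => ?_
    obtain ⟨N, hN⟩ := hu ε hε
    exact ⟨N, fun m hm k hk => by simpa [dist_eq_norm] using hN m hm k hk⟩
  obtain ⟨l, hl⟩ := cauchySeq_tendsto_of_complete hcauchy
  obtain ⟨y, rfl⟩ := hT l
  refine ⟨y, fun ε hε => ?_⟩
  obtain ⟨N, hN⟩ := Metric.tendsto_atTop.1 hl ε hε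
  exact ⟨N, fun m hm => by simpa [dist_eq_norm] using hN m hm⟩

theorem exists_linearMap_not_continuous {𝕜 E : Type*} [RCLike 𝕜] [NormedAddCommGroup E]
    [NormedSpace 𝕜 E] (h : ¬ FiniteDimensional 𝕜 E) :
    ∃ f : E →ₗ[𝕜] 𝕜, ¬ Continuous f := by
  let b := Basis.ofVectorSpace 𝕜 E
  have : Infinite (Basis.ofVectorSpaceIndex 𝕜 E) := by
    by_contra hfin
    rw [not_infinite_iff_finite] at hfin
    exact h (Module.Finite.of_basis b)
  obtain ⟨g, hg⟩ := Infinite.natEmbedding (Basis.ofVectorSpaceIndex 𝕜 E)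
  -- `f` grows like `n` on the normalised basis vectors `b (g n) / ‖b (g n)‖`
  let f : E →ₗ[𝕜] 𝕜 := b.constr 𝕜 (Function.extend g (fun n : ℕ => ((n * ‖b (g n)‖ : ℝ) : 𝕜)) 0)
  refine ⟨f, fun hcont => ?_⟩
  obtain ⟨C, -, hC⟩ := SemilinearMapClass.bound_of_continuous f hcont
  have hb : 0 < ‖b (g (⌈C⌉₊ + 1))‖ := norm_pos_iff.2 (b.ne_zero _)
  have hle := hC (b (g (⌈C⌉₊ + 1)))
  simp only [f, Basis.constr_basis, hg.extend_apply, RCLike.norm_ofReal] at hle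
  rw [abs_of_nonneg (by positivity)] at hle
  have hceil : ((⌈C⌉₊ + 1 : ℕ) : ℝ) ≤ C := le_of_mul_le_mul_right hle hb
  push_cast at hceil
  linarith [Nat.le_ceil C]

theorem continuous_of_norm_reflection_le {𝕜 E : Type*} [NormedField 𝕜] [CharZero 𝕜]
    [NormedAddCommGroup E] [NormedSpace 𝕜 E] {f : Dual 𝕜 E} {x₀ : E} (hf : f x₀ = 2) {c : ℝ}
    (hc : ∀ x, ‖reflection hf x‖ ≤ c * ‖x‖) :
    Continuous f := by
  have hx₀ : 0 < ‖x₀‖ := norm_pos_iff.2 <| by rintro rfl; simp at hf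
  refine AddMonoidHomClass.continuous_of_bound f ((1 + c) / ‖x₀‖) fun x => ?_
  rw [div_mul_eq_mul_div, le_div_iff₀ hx₀]
  calc ‖f x‖ * ‖x₀‖ = ‖x - reflection hf x‖ := by rw [reflection_apply, sub_sub_cancel, norm_smul]
    _ ≤ ‖x‖ + c * ‖x‖ := (norm_sub_le _ _).trans (add_le_add_right (hc x) _)
    _ = (1 + c) * ‖x‖ := by ring

/-- every infinite-dimensional Banach space admits a second,
complete, non-equivalent norm. -/
theorem stmt8 {𝕜 E : Type*} [RCLike 𝕜] [NormedAddCommGroup E] [NormedSpace 𝕜 E]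
    [CompleteSpace E] (h : ¬ FiniteDimensional 𝕜 E) :
    ∃ n₂ : E → ℝ, IsNormOn 𝕜 n₂ ∧ CompleteWith n₂ ∧
      ¬ ∃ c₁ > (0 : ℝ), ∃ c₂ > (0 : ℝ), ∀ u : E, c₁ * ‖u‖ ≤ n₂ u ∧ n₂ u ≤ c₂ * ‖u‖ := by
  obtain ⟨f, hf⟩ := exists_linearMap_not_continuous h
  obtain ⟨x₁, hx₁⟩ : ∃ x, f x ≠ 0 := by
    by_contra! hzero
    exact hf (by rw [show f = 0 from LinearMap.ext hzero]; exact continuous_zero)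
  have h2 : f ((2 / f x₁) • x₁) = 2 := by simp [hx₁]
  let T := reflection h2
  refine ⟨fun x => ‖T x‖, isNormOn_norm_comp T.injective, completeWith_norm_comp T.surjective, ?_⟩
  rintro ⟨_, _, c, _, hbound⟩
  exact hf (continuous_of_norm_reflection_le h2 fun x => (hbound x).2)
end

section
/- Let E be an infinite-dimensional reflexive Banach space of cardinality 𝔠. Then there exists a norm ‖·‖₂ on E, not equivalent to the original norm, such that (E, ‖·‖₂) is a Banach space that is not reflexive. -/
/-!
An infinite-dimensional Banach space `E` has Hamel dimension at least `𝔠`: a biorthogonal system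
`(xₙ, fₙ)` with `‖xₙ‖ = 1` sends each `t` of the open unit disc to `v t = ∑ tⁿ xₙ`, with
`fₘ (v t) = tᵐ`, and distinct geometric sequences are linearly independent (Dedekind's lemma for
the characters `n ↦ tⁿ`). As `#E = 𝔠`, both `E` and `ℓ¹(ℕ, 𝕜)` have Hamel dimension `𝔠`, so
there is a linear bijection `T : E ≃ ℓ¹(ℕ, 𝕜)`, and the norm of `ℓ¹` pulled back along `T` is the
new norm. It is complete, and not reflexive because `a ↦ ∑ n/(n+1) aₙ` has norm `1` but attains
it nowhere on the unit sphere. Reflexivity is invariant under isomorphisms of normed spaces, so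
the two norms are not equivalent.
-/

open Cardinal Function NormedSpace
open scoped lp

universe u

theorem linearIndependent_geometric (K : Type*) [Field K] :
    LinearIndependent K (fun t : K => fun n : ℕ => t ^ n) :=
  (linearIndependent_monoidHom (Multiplicative ℕ) K).comp (powersHom K) (powersHom K).injective

theorem continuum_le_rank_of_geometric_mem_range {𝕜 M : Type*} [NontriviallyNormedField 𝕜]
    [CompleteSpace 𝕜] [AddCommGroup M] [Module 𝕜 M] (L : M →ₗ[𝕜] ℕ → 𝕜)
    (hL : ∀ t : 𝕜, ‖t‖ < 1 → (fun n => t ^ n) ∈ LinearMap.range L) :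
    𝔠 ≤ Module.rank 𝕜 M := by
  choose v hv using fun t : Metric.ball (0 : 𝕜) 1 => hL t (mem_ball_zero_iff.1 t.2)
  have hv_indep : LinearIndependent 𝕜 v := by
    refine LinearIndependent.of_comp L ?_
    simp only [comp_def, hv]
    exact (linearIndependent_geometric 𝕜).comp _ Subtype.val_injective
  have hball : 𝔠 ≤ #(Metric.ball (0 : 𝕜) 1) :=
    continuum_le_cardinal_of_isOpen 𝕜 Metric.isOpen_ball ⟨0, Metric.mem_ball_self one_pos⟩
  simpa using (lift_le.2 hball).trans hv_indep.cardinal_lift_le_rank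

theorem exists_forall_apply_eq_zero_and_notMem {K V ι : Type*} [Field K] [AddCommGroup V]
    [Module K V] [Finite ι] (hV : ¬ FiniteDimensional K V) (φ : ι → V →ₗ[K] K)
    (W : Submodule K V) [FiniteDimensional K W] : ∃ y, (∀ i, φ i y = 0) ∧ y ∉ W := by
  by_contra! h
  have hker : LinearMap.ker (LinearMap.pi φ) ≤ W :=
    fun y hy => h y fun i => congrFun (LinearMap.mem_ker.1 hy) i
  have : W.CoFG := (Submodule.CoFG.ker _).of_le hker
  exact hV (Module.Finite.of_submodule_quotient W)

section Biorthogonal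

variable {𝕜 E : Type*} [RCLike 𝕜] [NormedAddCommGroup E] [NormedSpace 𝕜 E]

theorem exists_dual_eq_one_of_notMem (W : Submodule 𝕜 E) [FiniteDimensional 𝕜 W] {y : E}
    (hy : y ∉ W) : ∃ g : StrongDual 𝕜 E, g y = 1 ∧ ∀ w ∈ W, g w = 0 := by
  have : IsClosed (W : Set E) := W.closed_of_finiteDimensional
  obtain ⟨g, hg⟩ := SeparatingDual.exists_eq_one (R := 𝕜)
    (x := W.mkQ y) (by simpa [Submodule.Quotient.mk_eq_zero] using hy)
  refine ⟨g.comp W.mkQL, hg, fun w hw => ?_⟩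
  simp [(Submodule.Quotient.mk_eq_zero W).2 hw]

theorem exists_extend_biorthogonal (hE : ¬ FiniteDimensional 𝕜 E)
    (s : Finset (E × StrongDual 𝕜 E)) :
    ∃ q : E × StrongDual 𝕜 E, (‖q.1‖ = 1 ∧ q.2 q.1 = 1) ∧ ∀ p ∈ s, p.2 q.1 = 0 ∧ q.2 p.1 = 0 := by
  set W := Submodule.span 𝕜 (Prod.fst '' (s : Set (E × StrongDual 𝕜 E)))
  have : FiniteDimensional 𝕜 W := FiniteDimensional.span_of_finite 𝕜 (s.finite_toSet.image _)
  obtain ⟨y, hy_ker, hy_W⟩ := exists_forall_apply_eq_zero_and_notMem hE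
    (fun p : s => ((p.1.2 : StrongDual 𝕜 E) : E →ₗ[𝕜] 𝕜)) W
  have hy : y ≠ 0 := by rintro rfl; exact hy_W (zero_mem _)
  have hz : (‖y‖⁻¹ : 𝕜) • y ∉ W := by rwa [Submodule.smul_mem_iff _ (by simpa using hy)]
  obtain ⟨g, hgz, hg⟩ := exists_dual_eq_one_of_notMem _ hz
  refine ⟨(_, g), ⟨norm_smul_inv_norm hy, hgz⟩, fun p hp => ⟨?_, ?_⟩⟩
  · simpa using Or.inr (hy_ker ⟨p, hp⟩)
  · exact hg _ (Submodule.subset_span (Set.mem_image_of_mem _ hp))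

theorem exists_biorthogonal_seq (hE : ¬ FiniteDimensional 𝕜 E) :
    ∃ (x : ℕ → E) (f : ℕ → StrongDual 𝕜 E), (∀ n, ‖x n‖ = 1) ∧
      ∀ m n, f m (x n) = if m = n then 1 else 0 := by
  obtain ⟨p, hp, hpair⟩ := exists_seq_of_forall_finset_exists _ _
    fun s _ => exists_extend_biorthogonal hE s
  refine ⟨fun n => (p n).1, fun n => (p n).2, fun n => (hp n).1, fun m n => ?_⟩
  rcases lt_trichotomy m n with h | rfl | h
  · simp [h.ne, (hpair m n h).1]
  · simp [(hp m).2]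
  · simp [h.ne', (hpair n m h).2]

theorem continuum_le_rank_of_not_finiteDimensional [CompleteSpace E]
    (hE : ¬ FiniteDimensional 𝕜 E) : 𝔠 ≤ Module.rank 𝕜 E := by
  obtain ⟨x, f, hx, hfx⟩ := exists_biorthogonal_seq hE
  refine continuum_le_rank_of_geometric_mem_range
    (LinearMap.pi fun m => (f m : E →ₗ[𝕜] 𝕜)) fun t ht => ⟨∑' n, t ^ n • x n, ?_⟩
  have hsum : Summable fun n => t ^ n • x n := by
    refine Summable.of_norm ?_
    simpa [norm_smul, hx] using summable_geometric_of_lt_one (norm_nonneg t) ht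
  funext m
  simp [ContinuousLinearMap.map_tsum _ hsum, hfx]

end Biorthogonal

theorem not_surjective_inclusionInDoubleDual_of_forall_norm_apply_lt {𝕜 F : Type*} [RCLike 𝕜]
    [NormedAddCommGroup F] [NormedSpace 𝕜 F] {f : StrongDual 𝕜 F} (hf : f ≠ 0)
    (hlt : ∀ x, ‖x‖ = 1 → ‖f x‖ < ‖f‖) :
    ¬ Surjective (inclusionInDoubleDual 𝕜 F) := by
  intro hsurj
  obtain ⟨Φ, hΦ, hΦf⟩ := exists_dual_vector 𝕜 f (norm_ne_zero_iff.2 hf)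
  obtain ⟨x, rfl⟩ := hsurj Φ
  have hx : ‖x‖ = 1 := by rw [← hΦ, ← (inclusionInDoubleDualLi 𝕜 (E := F)).norm_map x]; rfl
  rw [dual_def] at hΦf
  simpa [hΦf] using hlt x hx

theorem ContinuousLinearEquiv.surjective_inclusionInDoubleDual {𝕜 F G : Type*} [RCLike 𝕜]
    [NormedAddCommGroup F] [NormedSpace 𝕜 F] [NormedAddCommGroup G] [NormedSpace 𝕜 G]
    (e : F ≃L[𝕜] G) (hF : Surjective (inclusionInDoubleDual 𝕜 F)) :
    Surjective (inclusionInDoubleDual 𝕜 G) := by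
  set e₂ := (e.arrowCongr (ContinuousLinearEquiv.refl 𝕜 𝕜)).arrowCongr
    (ContinuousLinearEquiv.refl 𝕜 𝕜)
  have h : ∀ x, e₂ (inclusionInDoubleDual 𝕜 F x) = inclusionInDoubleDual 𝕜 G (e x) := by
    intro x; ext g; simp [e₂]
  intro Φ
  obtain ⟨x, hx⟩ := hF (e₂.symm Φ)
  exact ⟨e x, by rw [← h, hx, e₂.apply_symm_apply]⟩

theorem RCLike.mk_le_continuum (𝕜 : Type*) [RCLike 𝕜] : #𝕜 ≤ 𝔠 := by
  have hinj : Injective fun z : 𝕜 => (RCLike.re z, RCLike.im z) := fun z w h =>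
    RCLike.ext (congrArg Prod.fst h) (congrArg Prod.snd h)
  simpa [mk_real] using lift_mk_le_lift_mk_of_injective hinj

theorem lp.norm_eq_tsum_norm_of_one {α E : Type*} [NormedAddCommGroup E] (a : ℓ¹(α, E)) :
    ‖a‖ = ∑' i, ‖a i‖ := by
  simpa using lp.norm_eq_tsum_rpow (by simp) a

theorem lp.summable_norm_of_one {α E : Type*} [NormedAddCommGroup E] (a : ℓ¹(α, E)) :
    Summable fun i => ‖a i‖ := by
  simpa using (lp.memℓp a).summable (by simp)

section Ell1

variable (𝕜 : Type*) [RCLike 𝕜]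

theorem mk_ell1_le_continuum : #ℓ¹(ℕ, 𝕜) ≤ 𝔠 :=
  calc #ℓ¹(ℕ, 𝕜) ≤ #(ℕ → 𝕜) := mk_le_of_injective fun a b h => lp.ext h
    _ = #𝕜 ^ ℵ₀ := by simp
    _ ≤ 𝔠 ^ ℵ₀ := power_le_power_right (RCLike.mk_le_continuum 𝕜)
    _ = 𝔠 := continuum_power_aleph0

theorem continuum_le_rank_ell1 : 𝔠 ≤ Module.rank 𝕜 ℓ¹(ℕ, 𝕜) := by
  refine continuum_le_rank_of_geometric_mem_range
    (LinearMap.pi fun n => lp.evalₗ (fun _ => 𝕜) 1 n) fun t ht => ?_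
  refine ⟨⟨fun n => t ^ n, memℓp_gen ?_⟩, rfl⟩
  simpa using summable_norm_geometric_of_norm_lt_one ht

noncomputable def ell1WeightedSum : StrongDual 𝕜 ℓ¹(ℕ, 𝕜) :=
  lp.tsumCLM (α := ℕ) (𝕜 := 𝕜) (E := 𝕜) ∘L
    lp.mapCLM 1 (fun n : ℕ => ((n / (n + 1) : ℝ) : 𝕜) • ContinuousLinearMap.id 𝕜 𝕜)
    zero_le_one fun n => by
      refine (norm_smul_le _ _).trans
        (mul_le_one₀ ?_ (norm_nonneg _) ContinuousLinearMap.norm_id_le)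
      rw [RCLike.norm_ofReal, abs_of_nonneg (by positivity)]
      exact div_le_one_of_le₀ (by linarith) (by positivity)

variable {𝕜}

theorem ell1WeightedSum_apply (a : ℓ¹(ℕ, 𝕜)) :
    ell1WeightedSum 𝕜 a = ∑' n : ℕ, ((n / (n + 1) : ℝ) : 𝕜) * a n := by
  simp [ell1WeightedSum]

theorem norm_ell1WeightedSum_apply_lt {a : ℓ¹(ℕ, 𝕜)} (ha : a ≠ 0) :
    ‖ell1WeightedSum 𝕜 a‖ < ‖a‖ := by
  obtain ⟨i, hi⟩ : ∃ i, a i ≠ 0 := by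
    by_contra! h
    exact ha (lp.ext (funext h))
  have hw : ∀ n : ℕ, ‖((n / (n + 1) : ℝ) : 𝕜) * a n‖ = n / (n + 1) * ‖a n‖ := fun n => by
    rw [norm_mul, RCLike.norm_ofReal, abs_of_nonneg (by positivity)]
  have hw_lt : ∀ n : ℕ, (n : ℝ) / (n + 1) < 1 :=
    fun n => (div_lt_one (by positivity)).2 (by linarith)
  have hle : ∀ n : ℕ, (n : ℝ) / (n + 1) * ‖a n‖ ≤ ‖a n‖ :=
    fun n => mul_le_of_le_one_left (norm_nonneg _) (hw_lt n).le
  have hsum : Summable fun n : ℕ => (n : ℝ) / (n + 1) * ‖a n‖ :=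
    (lp.summable_norm_of_one a).of_nonneg_of_le (fun n => by positivity) hle
  calc ‖ell1WeightedSum 𝕜 a‖ ≤ ∑' n : ℕ, ‖((n / (n + 1) : ℝ) : 𝕜) * a n‖ := by
        rw [ell1WeightedSum_apply]
        exact norm_tsum_le_tsum_norm (by simpa only [hw] using hsum)
    _ = ∑' n : ℕ, n / (n + 1) * ‖a n‖ := by simp only [hw]
    _ < ∑' n, ‖a n‖ := hsum.tsum_lt_tsum hle
        ((mul_lt_iff_lt_one_left (norm_pos_iff.2 hi)).2 (hw_lt i)) (lp.summable_norm_of_one a)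
    _ = ‖a‖ := (lp.norm_eq_tsum_norm_of_one a).symm

theorem one_le_norm_ell1WeightedSum : 1 ≤ ‖ell1WeightedSum 𝕜‖ := by
  refine le_of_tendsto' (tendsto_natCast_div_add_atTop (1 : ℝ)) fun N => ?_
  have := (ell1WeightedSum 𝕜).le_opNorm (lp.single 1 N 1)
  rw [lp.norm_single (by simp), norm_one, mul_one, ell1WeightedSum_apply] at this
  simp only [lp.single_apply, Pi.single_apply, mul_ite, mul_one, mul_zero, tsum_ite_eq] at this
  rwa [RCLike.norm_ofReal, abs_of_nonneg (by positivity)] at this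

variable (𝕜)

theorem ell1_not_surjective_inclusionInDoubleDual :
    ¬ Surjective (inclusionInDoubleDual 𝕜 ℓ¹(ℕ, 𝕜)) := by
  have hnorm := one_le_norm_ell1WeightedSum (𝕜 := 𝕜)
  refine not_surjective_inclusionInDoubleDual_of_forall_norm_apply_lt
    (f := ell1WeightedSum 𝕜) (by rintro h; norm_num [h] at hnorm) fun a ha => ?_
  calc ‖ell1WeightedSum 𝕜 a‖ < ‖a‖ := norm_ell1WeightedSum_apply_lt (by rintro rfl; simp at ha)
    _ ≤ ‖ell1WeightedSum 𝕜‖ := by rwa [ha]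

end Ell1

/-- every infinite-dimensional reflexive Banach space of cardinality 𝔠
carries a non-equivalent complete norm for which it is not reflexive; the new normed
space is realised (isometrically) as a Banach space `E₂` via a linear bijection. -/
theorem stmt15 {𝕜 E : Type u} [RCLike 𝕜] [NormedAddCommGroup E] [NormedSpace 𝕜 E]
    [CompleteSpace E] (hinf : ¬ FiniteDimensional 𝕜 E)
    (hcard : Cardinal.mk E = Cardinal.continuum)
    (hrefl : Function.Surjective (NormedSpace.inclusionInDoubleDual 𝕜 E)) :
    ∃ (E₂ : Type u) (_ : NormedAddCommGroup E₂) (_ : NormedSpace 𝕜 E₂)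
      (_ : CompleteSpace E₂) (T : E ≃ₗ[𝕜] E₂),
      (¬ ∃ c₁ > (0 : ℝ), ∃ c₂ > (0 : ℝ), ∀ u : E,
          c₁ * ‖u‖ ≤ ‖T u‖ ∧ ‖T u‖ ≤ c₂ * ‖u‖) ∧
      ¬ Function.Surjective (NormedSpace.inclusionInDoubleDual 𝕜 E₂) := by
  have hE : Module.rank 𝕜 E = 𝔠 := le_antisymm ((rank_le_card 𝕜 E).trans hcard.le)
    (continuum_le_rank_of_not_finiteDimensional hinf)
  have hℓ : Module.rank 𝕜 ℓ¹(ℕ, 𝕜) = 𝔠 := le_antisymm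
    ((rank_le_card 𝕜 _).trans (mk_ell1_le_continuum 𝕜)) (continuum_le_rank_ell1 𝕜)
  obtain ⟨T⟩ : Nonempty (E ≃ₗ[𝕜] ℓ¹(ℕ, 𝕜)) :=
    Module.nonempty_linearEquiv_iff_rank_eq.2 (hE.trans hℓ.symm)
  refine ⟨ℓ¹(ℕ, 𝕜), inferInstance, inferInstance, inferInstance, T, ?_,
    ell1_not_surjective_inclusionInDoubleDual 𝕜⟩
  rintro ⟨c₁, hc₁, c₂, -, hT⟩
  have hT_symm (v : ℓ¹(ℕ, 𝕜)) : ‖T.symm v‖ ≤ c₁⁻¹ * ‖v‖ := by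
    simpa [le_inv_mul_iff₀ hc₁] using (hT (T.symm v)).1
  let e : E ≃L[𝕜] ℓ¹(ℕ, 𝕜) :=
    T.toContinuousLinearEquivOfBounds c₂ c₁⁻¹ (fun u => (hT u).2) hT_symm
  exact ell1_not_surjective_inclusionInDoubleDual 𝕜 (e.surjective_inclusionInDoubleDual hrefl)
end

section
/- Let (E, ‖·‖) be a Banach space with Hamel basis {e_k}_{k∈I} such that every coordinate functional π_k : E → 𝕂 (sending u to its k-th coordinate in the basis) is continuous. Then E is finite-dimensional. -/
/-!
If `ι` were infinite, pick distinct indices `f 0, f 1, …`. Every vector has finitely many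
nonzero coordinates, so `E` is the countable union of the subspaces on which the coordinates
`π_{f k}`, `k ≥ n`, vanish. These are closed by continuity of the coordinates, so by Baire one of
them has nonempty interior and hence is all of `E`, which is absurd since it misses `e_{f n}`.
-/

open Set Filter Topology

theorem Submodule.exists_eq_top_of_iUnion_eq_univ {R M κ : Type*} [Ring R] [TopologicalSpace R]
    [NeBot (𝓝[{x : R | IsUnit x}] 0)] [TopologicalSpace M] [AddCommGroup M] [ContinuousAdd M]
    [Module R M] [ContinuousSMul R M] [BaireSpace M] [Countable κ] {S : κ → Submodule R M}
    (hS : ∀ n, IsClosed (S n : Set M)) (hcover : ⋃ n, (S n : Set M) = univ) : ∃ n, S n = ⊤ :=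
  (nonempty_interior_of_iUnion_of_closed hS hcover).imp fun n => (S n).eq_top_of_nonempty_interior'

namespace Module.Basis

variable {ι R M : Type*} [Semiring R] [AddCommMonoid M] [Module R M] (b : Basis ι R M) (f : ℕ → ι)

noncomputable def tailKer (n : ℕ) : Submodule R M :=
  ⨅ k ≥ n, LinearMap.ker (b.coord (f k))

theorem mem_tailKer {n : ℕ} {u : M} : u ∈ b.tailKer f n ↔ ∀ k ≥ n, b.coord (f k) u = 0 := by
  simp only [tailKer, Submodule.mem_iInf, LinearMap.mem_ker]

theorem isClosed_tailKer [TopologicalSpace R] [T1Space R] [TopologicalSpace M]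
    (h : ∀ i, Continuous (b.coord i)) (n : ℕ) : IsClosed (b.tailKer f n : Set M) := by
  have : (b.tailKer f n : Set M) = ⋂ k ≥ n, b.coord (f k) ⁻¹' {0} := by
    ext u
    simp [mem_tailKer]
  rw [this]
  exact isClosed_biInter fun k _ => isClosed_singleton.preimage (h _)

variable {f} in
theorem iUnion_tailKer (hf : Function.Injective f) :
    ⋃ n, (b.tailKer f n : Set M) = univ := by
  refine eq_univ_of_forall fun u => mem_iUnion.2 ?_
  obtain ⟨N, hN⟩ := ((b.repr u).support.finite_toSet.preimage hf.injOn).bddAbove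
  refine ⟨N + 1, (b.mem_tailKer f).2 fun k hk => ?_⟩
  by_contra hne
  exact absurd (hN (Finsupp.mem_support_iff.2 hne)) (by omega)

theorem apply_notMem_tailKer [Nontrivial R] (n : ℕ) : b (f n) ∉ b.tailKer f n := fun hmem =>
  by simpa using (b.mem_tailKer f).1 hmem n le_rfl

end Module.Basis

theorem Module.Basis.finite_of_continuous_coord {ι R M : Type*} [Ring R] [Nontrivial R]
    [TopologicalSpace R] [T1Space R] [NeBot (𝓝[{x : R | IsUnit x}] 0)] [TopologicalSpace M] [AddCommGroup M]
    [ContinuousAdd M] [Module R M] [ContinuousSMul R M] [BaireSpace M] (b : Basis ι R M)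
    (h : ∀ i, Continuous (b.coord i)) : Finite ι := by
  by_contra hι
  have : Infinite ι := not_finite_iff_infinite.1 hι
  let f := Infinite.natEmbedding ι
  obtain ⟨n, htop⟩ := Submodule.exists_eq_top_of_iUnion_eq_univ (b.isClosed_tailKer f h)
    (b.iUnion_tailKer f.injective)
  exact b.apply_notMem_tailKer f n (htop ▸ Submodule.mem_top)

/-- a Banach space with a Hamel basis all of whose coordinate
functionals are continuous is finite-dimensional. -/
theorem stmt18 {𝕜 E ι : Type*} [RCLike 𝕜] [NormedAddCommGroup E] [NormedSpace 𝕜 E]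
    [CompleteSpace E] (b : Module.Basis ι 𝕜 E)
    (h : ∀ i : ι, Continuous (b.coord i)) :
    FiniteDimensional 𝕜 E :=
  have := b.finite_of_continuous_coord h
  Module.Finite.of_basis b
end

section
/- Let E be a vector space over 𝕂 = ℝ or ℂ with a Hamel basis, and for 1 ≤ p < ∞ equip E with the p-norm ‖u‖_p = (Σ_k |α_k|^p)^{1/p}, where the α_k are the coordinates of u in the basis. Then (E, ‖·‖_p) is a Banach space if and only if E is finite-dimensional. -/
open Filter Topology Finset

section CompleteWith

variable {E F : Type*} [AddCommGroup E] [AddCommGroup F]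

theorem isCauchyWith_comp_addEquiv (n : F → ℝ) (e : E ≃+ F) (u : ℕ → E) :
    IsCauchyWith (n ∘ e) u ↔ IsCauchyWith n (e ∘ u) := by
  simp only [IsCauchyWith, Function.comp_apply, map_sub]

theorem completeWith_comp_addEquiv (n : F → ℝ) (e : E ≃+ F) :
    CompleteWith (n ∘ e) ↔ CompleteWith n := by
  constructor
  · intro h v hv
    obtain ⟨l, hl⟩ :=
      h (e.symm ∘ v) ((isCauchyWith_comp_addEquiv n e _).2 (by simpa [Function.comp_def] using hv))
    exact ⟨e l, by simpa [map_sub] using hl⟩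
  · intro h u hu
    obtain ⟨l, hl⟩ := h (e ∘ u) ((isCauchyWith_comp_addEquiv n e u).1 hu)
    exact ⟨e.symm l, by simpa [map_sub] using hl⟩

theorem isCauchyWith_sum_range (n : AddGroupSeminorm E) {y : ℕ → E}
    (hy : Summable fun i => n (y i)) : IsCauchyWith n fun m => ∑ i ∈ range m, y i := by
  intro ε hε
  obtain ⟨N, hN⟩ := Metric.cauchySeq_iff.1 hy.hasSum.tendsto_sum_nat.cauchySeq ε hε
  suffices key : ∀ m ≥ N, ∀ k ≥ N, k ≤ m → n (∑ i ∈ range m, y i - ∑ i ∈ range k, y i) < ε by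
    refine ⟨N, fun m hm k hk => ?_⟩
    rcases le_total k m with hkm | hmk
    · exact key m hm k hk hkm
    · rw [← map_neg_eq_map, neg_sub]
      exact key k hk m hm hmk
  intro m hm k hk hkm
  calc n (∑ i ∈ range m, y i - ∑ i ∈ range k, y i)
      = n (∑ i ∈ Ico k m, y i) := by rw [sum_Ico_eq_sub _ hkm]
    _ ≤ ∑ i ∈ Ico k m, n (y i) := le_sum_of_subadditive n (map_zero n).le (map_add_le_add n) _ _
    _ = ∑ i ∈ range m, n (y i) - ∑ i ∈ range k, n (y i) := sum_Ico_eq_sub _ hkm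
    _ ≤ dist (∑ i ∈ range m, n (y i)) (∑ i ∈ range k, n (y i)) := le_abs_self _
    _ < ε := hN m hm k hk

end CompleteWith

namespace Finsupp

variable {ι V : Type*} [SeminormedAddCommGroup V] {p : ℝ}

noncomputable def lpNorm (p : ℝ) (x : ι →₀ V) : ℝ :=
  (∑ k ∈ x.support, ‖x k‖ ^ p) ^ (1 / p)

theorem lpNorm_eq_of_support_subset (hp : p ≠ 0) {x : ι →₀ V} {s : Finset ι}
    (hs : x.support ⊆ s) : lpNorm p x = (∑ k ∈ s, ‖x k‖ ^ p) ^ (1 / p) := by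
  rw [lpNorm, sum_subset hs fun k _ hk => by
    rw [notMem_support_iff.1 hk, norm_zero, Real.zero_rpow hp]]

theorem lpNorm_zero (hp : p ≠ 0) : lpNorm p (0 : ι →₀ V) = 0 := by
  simp [lpNorm, Real.zero_rpow (inv_ne_zero hp)]

theorem lpNorm_neg (x : ι →₀ V) : lpNorm p (-x) = lpNorm p x := by
  simp [lpNorm]

theorem lpNorm_single (hp : p ≠ 0) (k : ι) (v : V) : lpNorm p (single k v) = ‖v‖ := by
  rw [lpNorm_eq_of_support_subset hp support_single_subset, sum_singleton, single_eq_same,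
    one_div, Real.rpow_rpow_inv (norm_nonneg v) hp]

theorem norm_apply_le_lpNorm (hp : 0 < p) (x : ι →₀ V) (k : ι) : ‖x k‖ ≤ lpNorm p x := by
  classical
  rw [lpNorm_eq_of_support_subset hp.ne' (subset_insert k x.support)]
  calc ‖x k‖ = (‖x k‖ ^ p) ^ (1 / p) := by rw [one_div, Real.rpow_rpow_inv (norm_nonneg _) hp.ne']
    _ ≤ _ := by
      gcongr
      exact Finset.single_le_sum (f := fun j => ‖x j‖ ^ p) (fun j _ => by positivity)
        (mem_insert_self k _)

theorem lpNorm_add_le (hp : 1 ≤ p) (x y : ι →₀ V) :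
    lpNorm p (x + y) ≤ lpNorm p x + lpNorm p y := by
  classical
  have hp0 : p ≠ 0 := by positivity
  rw [lpNorm_eq_of_support_subset hp0 support_add,
    lpNorm_eq_of_support_subset hp0 subset_union_left,
    lpNorm_eq_of_support_subset hp0 subset_union_right]
  calc (∑ k ∈ x.support ∪ y.support, ‖(x + y) k‖ ^ p) ^ (1 / p)
      ≤ (∑ k ∈ x.support ∪ y.support, (‖x k‖ + ‖y k‖) ^ p) ^ (1 / p) := by
        gcongr with k
        exact norm_add_le _ _
    _ ≤ _ := Real.Lp_add_le_of_nonneg _ hp (fun _ _ => norm_nonneg _) fun _ _ => norm_nonneg _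

noncomputable def lpSeminorm (hp : 1 ≤ p) : AddGroupSeminorm (ι →₀ V) where
  toFun := lpNorm p
  map_zero' := lpNorm_zero (by positivity)
  add_le' := lpNorm_add_le hp
  neg' := lpNorm_neg

@[simp]
theorem coe_lpSeminorm (hp : 1 ≤ p) : ⇑(lpSeminorm hp : AddGroupSeminorm (ι →₀ V)) = lpNorm p :=
  rfl

theorem lpNorm_le_sum_norm [Fintype ι] (hp : 1 ≤ p) (x : ι →₀ V) :
    lpNorm p x ≤ ∑ k, ‖x k‖ := by
  calc lpNorm p x = lpSeminorm hp (∑ k, single k (x k)) := by rw [univ_sum_single, coe_lpSeminorm]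
    _ ≤ ∑ k, lpSeminorm hp (single k (x k)) :=
        le_sum_of_subadditive _ (map_zero _).le (map_add_le_add _) _ _
    _ = ∑ k, ‖x k‖ := Finset.sum_congr rfl fun k _ => lpNorm_single (by positivity) k (x k)

theorem cauchySeq_apply_of_isCauchyWith (hp : 0 < p) {u : ℕ → ι →₀ V}
    (hu : IsCauchyWith (lpNorm p) u) (k : ι) : CauchySeq fun m => u m k := by
  refine Metric.cauchySeq_iff.2 fun ε hε => ?_
  obtain ⟨N, hN⟩ := hu ε hε
  refine ⟨N, fun m hm j hj => ?_⟩
  rw [dist_eq_norm, ← sub_apply]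
  exact (norm_apply_le_lpNorm hp _ k).trans_lt (hN m hm j hj)

theorem tendsto_apply_of_lpNorm_sub (hp : 0 < p) {u : ℕ → ι →₀ V} {l : ι →₀ V}
    (hl : ∀ ε > (0 : ℝ), ∃ N : ℕ, ∀ m ≥ N, lpNorm p (u m - l) < ε) (k : ι) :
    Tendsto (fun m => u m k) atTop (𝓝 (l k)) := by
  refine Metric.tendsto_atTop.2 fun ε hε => ?_
  obtain ⟨N, hN⟩ := hl ε hε
  refine ⟨N, fun m hm => ?_⟩
  rw [dist_eq_norm, ← sub_apply]
  exact (norm_apply_le_lpNorm hp _ k).trans_lt (hN m hm)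

theorem completeWith_lpNorm_of_finite [Finite ι] [CompleteSpace V] (hp : 1 ≤ p) :
    CompleteWith (lpNorm p : (ι →₀ V) → ℝ) := by
  cases nonempty_fintype ι
  intro u hu
  choose c hc using fun k =>
    cauchySeq_tendsto_of_complete (cauchySeq_apply_of_isCauchyWith (by positivity) hu k)
  refine ⟨equivFunOnFinite.symm c, fun ε hε => ?_⟩
  have hsum : Tendsto (fun m => ∑ k, ‖u m k - c k‖) atTop (𝓝 0) := by
    simpa using tendsto_finsetSum univ fun k _ => ((hc k).sub_const (c k)).norm
  obtain ⟨N, hN⟩ := eventually_atTop.1 (hsum.eventually (gt_mem_nhds hε))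
  exact ⟨N, fun m hm => (lpNorm_le_sum_norm hp _).trans_lt (by simpa using hN m hm)⟩

theorem not_completeWith_lpNorm_of_infinite {𝕜 : Type*} [NontriviallyNormedField 𝕜]
    [Infinite ι] (hp : 1 ≤ p) : ¬CompleteWith (lpNorm p : (ι →₀ 𝕜) → ℝ) := by
  intro hC
  obtain ⟨c, hc0, hc1⟩ := NormedField.exists_norm_lt_one 𝕜
  let f := Infinite.natEmbedding ι
  have hy : Summable fun i => lpSeminorm hp (single (f i) (c ^ i)) := by
    simpa [lpNorm_single (by positivity : p ≠ 0)] using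
      summable_geometric_of_lt_one (norm_nonneg c) hc1
  obtain ⟨l, hl⟩ := hC _ (isCauchyWith_sum_range _ hy)
  have hlf : ∀ i, l (f i) = c ^ i := fun i => by
    refine tendsto_nhds_unique (tendsto_apply_of_lpNorm_sub (by positivity) hl (f i))
      (tendsto_const_nhds.congr' ?_)
    filter_upwards [eventually_gt_atTop i] with m hm
    rw [finsetSum_apply, sum_eq_single_of_mem i (mem_range.2 hm)
      fun j _ hji => single_eq_of_ne (f.injective.ne hji).symm, single_eq_same]
  refine (Set.infinite_range_of_injective f.injective).mono ?_ l.support.finite_toSet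
  rintro _ ⟨i, rfl⟩
  simpa [hlf] using pow_ne_zero i (norm_pos_iff.1 hc0)

theorem completeWith_lpNorm_iff_finite {𝕜 : Type*} [NontriviallyNormedField 𝕜] [CompleteSpace 𝕜]
    (hp : 1 ≤ p) : CompleteWith (lpNorm p : (ι →₀ 𝕜) → ℝ) ↔ Finite ι := by
  refine ⟨fun h => ?_, fun _ => completeWith_lpNorm_of_finite hp⟩
  by_contra hι
  have := not_finite_iff_infinite.1 hι
  exact not_completeWith_lpNorm_of_infinite hp h

end Finsupp

/-- for a Hamel basis `b` of `E` and `1 ≤ p < ∞`, the `p`-norm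
`‖u‖_p = (Σ |α_k|^p)^(1/p)` (with `α` the coordinates of `u` in `b`) makes `E`
complete iff `E` is finite-dimensional. -/
theorem stmt19 {𝕜 E ι : Type*} [RCLike 𝕜] [AddCommGroup E] [Module 𝕜 E]
    (b : Module.Basis ι 𝕜 E) (p : ℝ) (hp : 1 ≤ p) :
    CompleteWith
        (fun u : E => (∑ k ∈ (b.repr u).support, ‖b.repr u k‖ ^ p) ^ (1 / p)) ↔
      FiniteDimensional 𝕜 E :=
  (completeWith_comp_addEquiv (Finsupp.lpNorm p) b.repr.toAddEquiv).trans <|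
    (Finsupp.completeWith_lpNorm_iff_finite hp).trans
      ⟨fun _ => Module.Finite.of_basis b, fun _ => Module.Finite.finite_basis b⟩
end
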